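/- Let G, M, λ > 0 and δ be real constants with G·M ≠ 0, δ ≠ 0 and δ ≠ −1, and define the Yukawa-like potential φ : (0,∞) → ℝ by φ(r) = −(G·M/(r·(δ+1)))·(1 + δ·e^(−r/λ)). Then for every r > 0, φ(r) + r·φ'(r) = (G·M·δ/((δ+1)·λ))·e^(−r/λ) ≠ 0; hence the Yukawa potential never satisfies the Schwarzschild-like condition g₀₀ = −1/g₁₁ with γ = 1 at any radius. -/

import Mathlib

/-- For the Yukawa-like potential, `φ(r) + r·φ'(r) = (GMδ/((δ+1)λ))·e^{−r/λ} ≠ 0` for every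
`r > 0`: the Schwarzschild-like condition with `γ = 1` fails at every radius. -/
theorem stmt_9 (G M lam δ : ℝ) (hG : 0 < G) (hM : 0 < M) (hlam : 0 < lam)
    (hGM : G * M ≠ 0) (hδ0 : δ ≠ 0) (hδ1 : δ ≠ -1) (φ : ℝ → ℝ)
    (hφ : ∀ r > (0:ℝ), φ r = -(G * M / (r * (δ + 1))) * (1 + δ * Real.exp (-r / lam))) :
    ∀ r > (0:ℝ),
      φ r + r * deriv φ r = (G * M * δ / ((δ + 1) * lam)) * Real.exp (-r / lam) ∧
      φ r + r * deriv φ r ≠ 0 := by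
  intro r hr
  have hδ1' : δ + 1 ≠ 0 := by intro h; apply hδ1; linarith
  have hrne : r ≠ 0 := ne_of_gt hr
  set f := fun x : ℝ => -(G * M / (x * (δ + 1))) * (1 + δ * Real.exp (-x / lam)) with hf
  -- derivative of f at r
  have hu : HasDerivAt (fun x : ℝ => -(G * M / (x * (δ + 1))))
      (G * M / (δ + 1) * (r ^ 2)⁻¹) r := by
    have h1 : HasDerivAt (fun x : ℝ => x⁻¹) (-(r ^ 2)⁻¹) r := hasDerivAt_inv hrne
    have h2 := h1.const_mul (-(G * M / (δ + 1)))
    have hfun : (fun x : ℝ => -(G * M / (x * (δ + 1)))) =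
        fun x : ℝ => -(G * M / (δ + 1)) * x⁻¹ := by
      funext x
      simp [div_eq_mul_inv, mul_inv]
      ring
    rw [hfun]
    exact h2.congr_deriv (by ring)
  have hv : HasDerivAt (fun x : ℝ => 1 + δ * Real.exp (-x / lam))
      (δ * Real.exp (-r / lam) * (-1 / lam)) r := by
    have h1 : HasDerivAt (fun x : ℝ => -x / lam) (-1 / lam) r := by
      simpa using (hasDerivAt_id r).neg.div_const lam
    have h2 := (h1.exp.const_mul δ).const_add 1
    exact h2.congr_deriv (by ring)
  have hfd := hu.mul hv
  have hev : φ =ᶠ[nhds r] f := by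
    filter_upwards [IsOpen.mem_nhds isOpen_Ioi hr] with x hx using hφ x hx
  have hφd : HasDerivAt φ
      (G * M / (δ + 1) * (r ^ 2)⁻¹ * (1 + δ * Real.exp (-r / lam)) +
        -(G * M / (r * (δ + 1))) * (δ * Real.exp (-r / lam) * (-1 / lam))) r :=
    hfd.congr_of_eventuallyEq hev
  have hderiv := hφd.deriv
  have key : φ r + r * deriv φ r = (G * M * δ / ((δ + 1) * lam)) * Real.exp (-r / lam) := by
    rw [hderiv, hφ r hr]
    field_simp
    ring
  refine ⟨key, ?_⟩
  rw [key]
  have hexp : Real.exp (-r / lam) ≠ 0 := (Real.exp_pos _).ne'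
  have : G * M * δ / ((δ + 1) * lam) ≠ 0 := by
    apply div_ne_zero (mul_ne_zero hGM hδ0) (mul_ne_zero hδ1' (ne_of_gt hlam))
  exact mul_ne_zero this hexp
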